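/- Let α > −1, β ∈ {0, 1/3}, γ ≥ 1, and let ω be a weight on the upper half-plane H. Let {λ_Q}_{Q ∈ 𝒬^β} be a family of nonnegative numbers indexed by the dyadic Carleson squares 𝒬^β = {Q_I : I ∈ D^β}, and assume there is a constant A > 0 such that for every Q⁰ ∈ 𝒬^β, ∑_{Q ∈ 𝒬^β, Q ⊆ Q⁰} λ_Q ≤ A |Q⁰|_{ω,α}^γ. Then there is a constant B > 0 such that for every 1 < p < ∞, every normalized Young function Φ in the class B_p, and every compactly supported measurable function f, ∑_{Q ∈ 𝒬^β} λ_Q ‖f‖_{Q,Φ,ω,α}^{pγ} ≤ B ‖M^{d,β}_{Φ,ω,α} f‖_{L^p(H, ω dV_α)}^{pγ}. -/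

import Mathlib

open MeasureTheory Set Filter
open scoped ENNReal NNReal

noncomputable section

/-- The upper half-plane `H = {z : 0 < Im z}`. -/
def UHP : Set ℂ := {z : ℂ | 0 < z.im}

/-- The measure `dV_α = y^α dx dy` supported on the upper half-plane. -/
def Vm (α : ℝ) : Measure ℂ :=
  MeasureTheory.volume.withDensity
    (fun z => if 0 < z.im then ENNReal.ofReal (z.im ^ α) else 0)

/-- The Carleson square `Q_I` attached to the interval `I = (a, b)`. -/
def Qbox (a b : ℝ) : Set ℂ :=
  {z : ℂ | z.re ∈ Set.Ioo a b ∧ z.im ∈ Set.Ioo 0 (b - a)}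

/-- The weighted measure `|E|_{ω,α} = ∫_E ω dV_α` of a set `E`. -/
def wvol (α : ℝ) (ω : ℂ → ℝ) (E : Set ℂ) : ℝ≥0∞ :=
  ∫⁻ z in E, ENNReal.ofReal (ω z) ∂(Vm α)

/-- A weight: a nonnegative locally integrable function on the upper half-plane. -/
def IsWeight (α : ℝ) (ω : ℂ → ℝ) : Prop :=
  Measurable ω ∧ (∀ z, 0 ≤ ω z) ∧ MeasureTheory.LocallyIntegrableOn ω UHP (Vm α)

/-- A normalized Young function: continuous, convex, increasing on `[0,∞)`,
with `Φ 0 = 0`, `Φ 1 = 1` and `Φ t → ∞` as `t → ∞`. -/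
structure IsNormalizedYoung (Φ : ℝ → ℝ) : Prop where
  cont : ContinuousOn Φ (Set.Ici 0)
  convex : ConvexOn ℝ (Set.Ici 0) Φ
  mono : MonotoneOn Φ (Set.Ici 0)
  map_zero : Φ 0 = 0
  map_one : Φ 1 = 1
  tendsto_atTop : Filter.Tendsto Φ Filter.atTop Filter.atTop

/-- The `Δ₂` (doubling) condition with constant `K`. -/
def Delta2 (Φ : ℝ → ℝ) (K : ℝ) : Prop :=
  1 < K ∧ ∀ t : ℝ, 0 ≤ t → Φ (2 * t) ≤ K * Φ t

/-- The class `B_p`: `Δ₂` together with `∫_c^∞ Φ(t)/t^p dt/t < ∞` for some `c > 0`. -/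
def InBp (Φ : ℝ → ℝ) (p : ℝ) : Prop :=
  (∃ K : ℝ, Delta2 Φ K) ∧
    ∃ c : ℝ, 0 < c ∧ (∫⁻ t in Set.Ioi c, ENNReal.ofReal (Φ t / t ^ (p + 1))) < ⊤

/-- The Luxemburg norm `‖f‖_{Q_I, Φ, ω, α}` over the Carleson square of `I = (a,b)`. -/
def luxNorm (α : ℝ) (Φ : ℝ → ℝ) (ω : ℂ → ℝ) (a b : ℝ) (f : ℂ → ℂ) : ℝ≥0∞ :=
  ⨅ (t : ℝ) (_ : 0 < t)
    (_ : (∫⁻ z in Qbox a b, ENNReal.ofReal (Φ (‖f z‖ / t) * ω z) ∂(Vm α)) /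
          wvol α ω (Qbox a b) ≤ 1),
    ENNReal.ofReal t

/-- The maximal function `M_{Φ,ω,α} f`. -/
def maxFn (α : ℝ) (Φ : ℝ → ℝ) (ω : ℂ → ℝ) (f : ℂ → ℂ) (z : ℂ) : ℝ≥0∞ :=
  ⨆ (a : ℝ) (b : ℝ) (_ : z ∈ Qbox a b), luxNorm α Φ ω a b f

/-- The dyadic grid `D^β`, as a set of pairs of endpoints. -/
def dyadicGrid (β : ℝ) : Set (ℝ × ℝ) :=
  {I : ℝ × ℝ | ∃ j m : ℤ, I.1 = (2 : ℝ) ^ j * (m + (-1 : ℝ) ^ j * β) ∧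
    I.2 = (2 : ℝ) ^ j * (m + 1 + (-1 : ℝ) ^ j * β)}

/-- The dyadic maximal function `M^{d,β}_{Φ,ω,α} f`. -/
def dyadicMax (β α : ℝ) (Φ : ℝ → ℝ) (ω : ℂ → ℝ) (f : ℂ → ℂ) (z : ℂ) : ℝ≥0∞ :=
  ⨆ (I : ℝ × ℝ) (_ : I ∈ dyadicGrid β) (_ : z ∈ Qbox I.1 I.2),
    luxNorm α Φ ω I.1 I.2 f

/-- The Hardy–Littlewood maximal function `M_α g` of the upper half-plane. -/
def hlMax (α : ℝ) (g : ℂ → ℝ) (z : ℂ) : ℝ≥0∞ :=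
  ⨆ (a : ℝ) (b : ℝ) (_ : z ∈ Qbox a b),
    (∫⁻ w in Qbox a b, ENNReal.ofReal |g w| ∂(Vm α)) / Vm α (Qbox a b)

/-- The weighted Hardy–Littlewood maximal function `M_{ω,α} f`. -/
def whlMax (α : ℝ) (ω : ℂ → ℝ) (f : ℂ → ℂ) (z : ℂ) : ℝ≥0∞ :=
  ⨆ (a : ℝ) (b : ℝ) (_ : z ∈ Qbox a b),
    (∫⁻ w in Qbox a b, ENNReal.ofReal (‖f w‖ * ω w) ∂(Vm α)) /
      wvol α ω (Qbox a b)

/-- The Békollè–Bonami constant `[ω]_{B_{p,α}}`. -/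
def BBnorm (α p : ℝ) (ω : ℂ → ℝ) : ℝ≥0∞ :=
  ⨆ (a : ℝ) (b : ℝ) (_ : a < b),
    (wvol α ω (Qbox a b) / Vm α (Qbox a b)) *
      ((∫⁻ z in Qbox a b, ENNReal.ofReal (ω z) ^ (1 - p / (p - 1)) ∂(Vm α)) /
          Vm α (Qbox a b)) ^ (p - 1)

/-- Membership in the Békollè–Bonami class `B_{p,α}`. -/
def InBB (α p : ℝ) (ω : ℂ → ℝ) : Prop := BBnorm α p ω < ⊤

/-- Membership in `𝔹_{∞,α} = ⋃_{p>1} B_{p,α}`. -/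
def InBBinfty (α : ℝ) (ω : ℂ → ℝ) : Prop := ∃ p : ℝ, 1 < p ∧ InBB α p ω

/-- The quantity `∫_H |f|^p ω dV_α`. -/
def lpInt (α p : ℝ) (ω : ℂ → ℝ) (f : ℂ → ℂ) : ℝ≥0∞ :=
  ∫⁻ z, ENNReal.ofReal (‖f z‖) ^ p * ENNReal.ofReal (ω z) ∂(Vm α)

/-- The function `K_μ(z) = sup_{I : z ∈ Q_I} μ(Q_I)/|Q_I|_{ω,α}`. -/
def Kmu (α : ℝ) (ω : ℂ → ℝ) (μ : Measure ℂ) (z : ℂ) : ℝ≥0∞ :=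
  ⨆ (a : ℝ) (b : ℝ) (_ : z ∈ Qbox a b), μ (Qbox a b) / wvol α ω (Qbox a b)

/-- `ω` is `α`-doubling with doubling function `φ` and constant `K`. -/
structure AlphaDoubling (α : ℝ) (ω : ℂ → ℝ) (φ : ℝ≥0∞ → ℝ≥0∞) (K : ℝ≥0∞) : Prop where
  mono : Monotone φ
  map_one : φ 1 = 1
  one_le : 1 ≤ K
  bound : ∀ a b : ℝ, ∀ E ⊆ Qbox a b, MeasurableSet E →
    wvol α ω (Qbox a b) / wvol α ω E ≤ K * φ (Vm α (Qbox a b) / Vm α E)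

/-- The complementary (conjugate) Young function `Ψ(s) = sup_{t ≥ 0} (t s − Φ(t))`,
valued in `ℝ≥0∞`. -/
def conjugateYoung (Φ : ℝ → ℝ) (s : ℝ) : ℝ≥0∞ :=
  ⨆ (t : ℝ) (_ : 0 ≤ t), ENNReal.ofReal (t * s - Φ t)

/-- The unweighted Luxemburg norm for an `ℝ≥0∞`-valued Young function. -/
def luxNormE (α : ℝ) (Ψ : ℝ → ℝ≥0∞) (a b : ℝ) (g : ℂ → ℝ) : ℝ≥0∞ :=
  ⨅ (t : ℝ) (_ : 0 < t)
    (_ : (∫⁻ z in Qbox a b, Ψ (|g z| / t) ∂(Vm α)) / Vm α (Qbox a b) ≤ 1),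
    ENNReal.ofReal t

/-- The Békollè–Bonami `B_{∞,α}` constant
`[ω]_{B_{∞,α}} = sup_I |Q_I|_{ω,α}⁻¹ ∫_{Q_I} M_α(ω χ_{Q_I}) dV_α`. -/
def BBinftyNorm (α : ℝ) (ω : ℂ → ℝ) : ℝ≥0∞ :=
  ⨆ (a : ℝ) (b : ℝ) (_ : a < b),
    (∫⁻ z in Qbox a b, hlMax α ((Qbox a b).indicator ω) z ∂(Vm α)) /
      wvol α ω (Qbox a b)

end

/-!
By the layer-cake formula, `∑_Q λ_Q ‖f‖_Q^{pγ} = pγ ∫_0^∞ t^{pγ-1} ∑_{‖f‖_Q > t} λ_Q dt`.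
Every square with `‖f‖_Q > t` lies in `G_t = {M f > t}`. Grouping these squares under the
maximal ones, which are pairwise disjoint because `D^β` is nested (this needs `3β ∈ ℤ`), the
Carleson condition bounds the inner sum by `A |G_t|^γ ≤ A |G_t|^{γ-1} |G_t|`. Chebyshev's
inequality `|G_t| ≤ t^{-p} ‖M f‖_p^p` on the first factor and the layer-cake formula for `M f`
give the bound with `B = Aγ`.
-/

namespace ENNReal

theorem rpow_sub_one_mul {γ : ℝ} (hγ : 1 ≤ γ) (x : ℝ≥0∞) : x ^ (γ - 1) * x = x ^ γ := by
  conv_rhs => rw [← sub_add_cancel γ 1, rpow_add_of_nonneg _ _ (by linarith) zero_le_one, rpow_one]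

theorem rpow_le_rpow_sub_one_mul {γ : ℝ} (hγ : 1 ≤ γ) {x y : ℝ≥0∞} (h : x ≤ y) :
    x ^ γ ≤ y ^ (γ - 1) * x := by
  rw [← rpow_sub_one_mul hγ x]
  gcongr

end ENNReal

theorem ofReal_mul_lintegral_Ioo_rpow_sub_one {p : ℝ} (hp : 0 < p) {c : ℝ} (hc : 0 ≤ c) :
    ENNReal.ofReal p * ∫⁻ t in Ioo 0 c, ENNReal.ofReal (t ^ (p - 1)) = ENNReal.ofReal (c ^ p) := by
  have hint : IntegrableOn (fun t : ℝ => p * t ^ (p - 1)) (Ioc 0 c) :=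
    ((intervalIntegral.intervalIntegrable_rpow' (by linarith)).const_mul p).1
  rw [← lintegral_const_mul' _ _ ENNReal.ofReal_ne_top, Measure.restrict_congr_set Ioo_ae_eq_Ioc]
  simp_rw [← ENNReal.ofReal_mul hp.le]
  rw [← ofReal_integral_eq_lintegral_ofReal hint, ← intervalIntegral.integral_of_le hc,
    intervalIntegral.integral_const_mul, integral_rpow (Or.inl (by linarith)), sub_add_cancel,
    Real.zero_rpow hp.ne', sub_zero, mul_div_cancel₀ _ hp.ne']
  filter_upwards [ae_restrict_mem measurableSet_Ioc] with t ht
  have := Real.rpow_nonneg ht.1.le (p - 1)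
  positivity

theorem ofReal_mul_lintegral_Ioi_indicator_rpow_sub_one {p : ℝ} (hp : 0 < p) (x : ℝ≥0∞) :
    ENNReal.ofReal p * ∫⁻ t in Ioi 0, {t : ℝ | ENNReal.ofReal t < x}.indicator
      (fun t => ENNReal.ofReal (t ^ (p - 1))) t = x ^ p := by
  have h_fin {x : ℝ≥0∞} (hx : x ≠ ⊤) : ENNReal.ofReal p * ∫⁻ t in Ioi 0,
      {t : ℝ | ENNReal.ofReal t < x}.indicator (fun t => ENNReal.ofReal (t ^ (p - 1))) t
        = x ^ p := by
    have h_eq : ∫⁻ t in Ioi 0, {t : ℝ | ENNReal.ofReal t < x}.indicator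
        (fun t => ENNReal.ofReal (t ^ (p - 1))) t =
        ∫⁻ t in Ioi 0, (Iio x.toReal).indicator (fun t => ENNReal.ofReal (t ^ (p - 1))) t :=
      setLIntegral_congr_fun measurableSet_Ioi fun t ht => by
        simp only [indicator_apply, mem_ofPred_eq, mem_Iio,
          ENNReal.ofReal_lt_iff_lt_toReal ht.le hx]
    rw [h_eq, lintegral_indicator measurableSet_Iio, Measure.restrict_restrict measurableSet_Iio,
      Iio_inter_Ioi, ofReal_mul_lintegral_Ioo_rpow_sub_one hp ENNReal.toReal_nonneg,
      ← ENNReal.ofReal_rpow_of_nonneg ENNReal.toReal_nonneg hp.le, ENNReal.ofReal_toReal hx]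
  rcases ne_or_eq x ⊤ with hx | rfl
  · exact h_fin hx
  refine (ENNReal.top_rpow_of_pos hp).symm ▸ ENNReal.eq_top_of_forall_nnreal_le fun r => ?_
  calc (r : ℝ≥0∞) = ((r : ℝ≥0∞) ^ p⁻¹) ^ p := (ENNReal.rpow_inv_rpow hp.ne' _).symm
    _ = _ := (h_fin (by simp [hp.le])).symm
    _ ≤ _ := by gcongr; exact le_top

theorem lintegral_rpow_eq_lintegral_meas_lt_mul_of_ennreal {X : Type*} [MeasurableSpace X]
    (μ : Measure X) [SFinite μ] {g : X → ℝ≥0∞} (hg : Measurable g) {p : ℝ} (hp : 0 < p) :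
    ∫⁻ x, g x ^ p ∂μ = ENNReal.ofReal p *
      ∫⁻ t in Ioi 0, μ {x | ENNReal.ofReal t < g x} * ENNReal.ofReal (t ^ (p - 1)) := by
  have hS : MeasurableSet {q : X × ℝ | ENNReal.ofReal q.2 < g q.1} :=
    measurableSet_lt (ENNReal.measurable_ofReal.comp measurable_snd) (hg.comp measurable_fst)
  have h_slice (t : ℝ) : ∫⁻ x, {t : ℝ | ENNReal.ofReal t < g x}.indicator
      (fun t => ENNReal.ofReal (t ^ (p - 1))) t ∂μ
        = μ {x | ENNReal.ofReal t < g x} * ENNReal.ofReal (t ^ (p - 1)) := by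
    rw [mul_comm, ← lintegral_indicator_const (s := {x | ENNReal.ofReal t < g x})
      (hg measurableSet_Ioi)]
    rfl
  calc ∫⁻ x, g x ^ p ∂μ
      = ∫⁻ x, ENNReal.ofReal p * (∫⁻ t in Ioi 0, {t : ℝ | ENNReal.ofReal t < g x}.indicator
          (fun t => ENNReal.ofReal (t ^ (p - 1))) t) ∂μ := by
        simp_rw [ofReal_mul_lintegral_Ioi_indicator_rpow_sub_one hp]
    _ = ENNReal.ofReal p * ∫⁻ t in Ioi 0, (∫⁻ x, {t : ℝ | ENNReal.ofReal t < g x}.indicator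
          (fun t => ENNReal.ofReal (t ^ (p - 1))) t ∂μ) := by
        rw [lintegral_const_mul' _ _ ENNReal.ofReal_ne_top]
        congr 1
        refine lintegral_lintegral_swap ?_
        exact ((ENNReal.measurable_ofReal.comp (measurable_snd.pow_const _)).indicator
          hS).aemeasurable
    _ = _ := by simp_rw [h_slice]

theorem meas_lt_le_lintegral_rpow_div {Y : Type*} [MeasurableSpace Y] (μ : Measure Y)
    {M : Y → ℝ≥0∞} (hM : Measurable M) {p t : ℝ} (hp : 0 < p) (ht : 0 < t) :
    μ {y | ENNReal.ofReal t < M y} ≤ (∫⁻ y, M y ^ p ∂μ) / ENNReal.ofReal (t ^ p) := by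
  refine (measure_mono fun y hy => ?_).trans (meas_ge_le_lintegral_div (hM.pow_const p).aemeasurable
    (by simpa using Real.rpow_pos_of_pos ht p) ENNReal.ofReal_ne_top)
  rw [mem_ofPred_eq, ← ENNReal.ofReal_rpow_of_nonneg ht.le hp.le]
  exact ENNReal.rpow_le_rpow (le_of_lt hy) hp.le

theorem div_ofReal_rpow_rpow_mul_ofReal_rpow (J : ℝ≥0∞) {p γ t : ℝ} (hγ : 1 ≤ γ) (ht : 0 < t) :
    (J / ENNReal.ofReal (t ^ p)) ^ (γ - 1) * ENNReal.ofReal (t ^ (p * γ - 1))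
      = J ^ (γ - 1) * ENNReal.ofReal (t ^ (p - 1)) := by
  have htp : 0 < (t ^ p) ^ (γ - 1) := by positivity
  rw [ENNReal.div_rpow_of_nonneg _ _ (by linarith), ENNReal.ofReal_rpow_of_pos (by positivity),
    div_eq_mul_inv, mul_assoc, mul_comm _ (ENNReal.ofReal _), ← div_eq_mul_inv,
    ← ENNReal.ofReal_div_of_pos htp, ← Real.rpow_mul ht.le,
    ← Real.rpow_sub ht]
  ring_nf

theorem lintegral_rpow_mul_le_of_meas_lt_le {X Y : Type*} [MeasurableSpace X] [MeasurableSpace Y]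
    {ν : Measure X} {μ : Measure Y} [SFinite ν] [SFinite μ] {g : X → ℝ≥0∞} {M : Y → ℝ≥0∞}
    (hg : Measurable g) (hM : Measurable M) {p γ : ℝ} (hp : 0 < p) (hγ : 1 ≤ γ) (A : ℝ≥0∞)
    (h : ∀ t : ℝ, 0 < t →
      ν {x | ENNReal.ofReal t < g x} ≤ A * μ {y | ENNReal.ofReal t < M y} ^ γ) :
    ∫⁻ x, g x ^ (p * γ) ∂ν ≤ A * ENNReal.ofReal γ * (∫⁻ y, M y ^ p ∂μ) ^ γ := by
  set J := ∫⁻ y, M y ^ p ∂μ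
  have h_tail_meas : Measurable fun t : ℝ =>
      μ {y | ENNReal.ofReal t < M y} * ENNReal.ofReal (t ^ (p - 1)) := by
    refine Measurable.mul (Antitone.measurable fun s t hst => measure_mono fun y hy => ?_)
      (by fun_prop)
    exact (ENNReal.ofReal_le_ofReal hst).trans_lt hy
  have h_tail (t : ℝ) (ht : t ∈ Ioi 0) :
      ν {x | ENNReal.ofReal t < g x} * ENNReal.ofReal (t ^ (p * γ - 1))
        ≤ A * J ^ (γ - 1) * (μ {y | ENNReal.ofReal t < M y} * ENNReal.ofReal (t ^ (p - 1))) :=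
    calc ν {x | ENNReal.ofReal t < g x} * ENNReal.ofReal (t ^ (p * γ - 1))
        ≤ A * ((J / ENNReal.ofReal (t ^ p)) ^ (γ - 1) * μ {y | ENNReal.ofReal t < M y})
            * ENNReal.ofReal (t ^ (p * γ - 1)) := by
          have h_cheb := meas_lt_le_lintegral_rpow_div μ hM hp ht
          grw [h t ht, ENNReal.rpow_le_rpow_sub_one_mul hγ h_cheb]
      _ = A * μ {y | ENNReal.ofReal t < M y} *
            ((J / ENNReal.ofReal (t ^ p)) ^ (γ - 1) * ENNReal.ofReal (t ^ (p * γ - 1))) := by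
          ring
      _ = A * J ^ (γ - 1) * (μ {y | ENNReal.ofReal t < M y} * ENNReal.ofReal (t ^ (p - 1))) := by
          rw [div_ofReal_rpow_rpow_mul_ofReal_rpow J hγ ht]
          ring
  calc ∫⁻ x, g x ^ (p * γ) ∂ν
      = ENNReal.ofReal (p * γ) * ∫⁻ t in Ioi 0,
          ν {x | ENNReal.ofReal t < g x} * ENNReal.ofReal (t ^ (p * γ - 1)) :=
        lintegral_rpow_eq_lintegral_meas_lt_mul_of_ennreal ν hg (by positivity)
    _ ≤ ENNReal.ofReal (p * γ) * ∫⁻ t in Ioi 0, A * J ^ (γ - 1) *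
          (μ {y | ENNReal.ofReal t < M y} * ENNReal.ofReal (t ^ (p - 1))) := by
        gcongr _ * ?_
        exact setLIntegral_mono' measurableSet_Ioi h_tail
    _ = A * ENNReal.ofReal γ * J ^ (γ - 1) * (ENNReal.ofReal p * ∫⁻ t in Ioi 0,
          μ {y | ENNReal.ofReal t < M y} * ENNReal.ofReal (t ^ (p - 1))) := by
        rw [lintegral_const_mul _ h_tail_meas, mul_comm p, ENNReal.ofReal_mul (by linarith)]
        ring
    _ = A * ENNReal.ofReal γ * J ^ γ := by
        rw [← lintegral_rpow_eq_lintegral_meas_lt_mul_of_ennreal μ hM hp, mul_assoc _ (J ^ _),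
          ENNReal.rpow_sub_one_mul hγ]

/-- The left endpoints `2^j (m + (-1)^j β)` of the level-`j` intervals of `D^β`. -/
def dyadicPoints (β : ℝ) (j : ℤ) : Set ℝ :=
  range fun m : ℤ => (2 : ℝ) ^ j * (m + (-1 : ℝ) ^ j * β)

section DyadicGrid

variable {β : ℝ}

theorem dyadicGrid_countable (β : ℝ) : (dyadicGrid β).Countable := by
  refine (countable_range fun k : ℤ × ℤ => ((2 : ℝ) ^ k.1 * (k.2 + (-1 : ℝ) ^ k.1 * β),
    (2 : ℝ) ^ k.1 * (k.2 + 1 + (-1 : ℝ) ^ k.1 * β))).mono ?_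
  rintro I ⟨j, m, h₁, h₂⟩
  exact ⟨(j, m), Prod.ext h₁.symm h₂.symm⟩

theorem exists_of_mem_dyadicGrid {I : ℝ × ℝ} (hI : I ∈ dyadicGrid β) :
    ∃ j : ℤ, I.1 ∈ dyadicPoints β j ∧ I.2 = I.1 + 2 ^ j := by
  obtain ⟨j, m, h₁, h₂⟩ := hI
  exact ⟨j, ⟨m, h₁.symm⟩, by rw [h₁, h₂]; ring⟩

theorem fst_lt_snd_of_mem_dyadicGrid {I : ℝ × ℝ} (hI : I ∈ dyadicGrid β) : I.1 < I.2 := by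
  obtain ⟨j, -, h⟩ := exists_of_mem_dyadicGrid hI
  rw [h]
  exact lt_add_of_pos_right _ (zpow_pos two_pos j)

theorem eq_of_Ico_eq_of_mem_dyadicGrid {I J : ℝ × ℝ} (hI : I ∈ dyadicGrid β)
    (h : Ico I.1 I.2 = Ico J.1 J.2) : I = J := by
  obtain ⟨h₁, h₂⟩ := (Ico_eq_Ico_iff (Or.inl (fst_lt_snd_of_mem_dyadicGrid hI))).1 h
  exact Prod.ext h₁ h₂

theorem add_two_zpow_mem_dyadicPoints {j : ℤ} {x : ℝ} (hx : x ∈ dyadicPoints β j) :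
    x + 2 ^ j ∈ dyadicPoints β j := by
  obtain ⟨m, rfl⟩ := hx
  exact ⟨m + 1, by push_cast; ring⟩

theorem exists_eq_add_int_mul_of_mem_dyadicPoints {j : ℤ} {x y : ℝ} (hx : x ∈ dyadicPoints β j)
    (hy : y ∈ dyadicPoints β j) : ∃ n : ℤ, y = x + n * 2 ^ j := by
  obtain ⟨m, rfl⟩ := hx
  obtain ⟨m', rfl⟩ := hy
  exact ⟨m' - m, by push_cast; ring⟩

/-- The level-`(j+1)` point `2^j (2m ∓ 2β)` is the level-`j` point of index `2m ∓ 3β`. -/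
theorem dyadicPoints_antitone (h3β : ∃ k : ℤ, 3 * β = k) : Antitone (dyadicPoints β) := by
  obtain ⟨k, hk⟩ := h3β
  refine antitone_int_of_succ_le fun j => ?_
  rintro _ ⟨m, rfl⟩
  have h₂ : (2 : ℝ) ^ (j + 1) = 2 ^ j * 2 := zpow_add_one₀ two_ne_zero j
  have hs : (-1 : ℝ) ^ (j + 1) = -(-1) ^ j := by rw [zpow_add_one₀ (by norm_num)]; ring
  rcases Int.even_or_odd j with hj | hj
  · refine ⟨2 * m - k, ?_⟩
    simp only [h₂, hs, hj.neg_one_zpow]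
    push_cast
    linear_combination (2 : ℝ) ^ j * hk
  · refine ⟨2 * m + k, ?_⟩
    simp only [h₂, hs, hj.neg_one_zpow]
    push_cast
    linear_combination -(2 : ℝ) ^ j * hk

theorem Ico_subset_or_disjoint_of_int_mul {u : ℝ} (hu : 0 < u) (a : ℝ) (n₁ n₂ : ℤ) :
    Ico a (a + u) ⊆ Ico (a + n₁ * u) (a + n₂ * u) ∨
      Disjoint (Ico a (a + u)) (Ico (a + n₁ * u) (a + n₂ * u)) := by
  by_cases h : n₁ ≤ 0 ∧ 1 ≤ n₂
  · have h₁ : (n₁ : ℝ) ≤ 0 := by exact_mod_cast h.1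
    have h₂ : (1 : ℝ) ≤ n₂ := by exact_mod_cast h.2
    left
    exact Ico_subset_Ico (by nlinarith) (by nlinarith)
  · right
    rw [Set.disjoint_left]
    rintro x ⟨hx₁, hx₂⟩ ⟨hy₁, hy₂⟩
    rcases not_and_or.1 h with h₁ | h₂
    · have : (1 : ℝ) ≤ n₁ := by exact_mod_cast Int.lt_iff_add_one_le.1 (not_le.1 h₁)
      nlinarith
    · have : (n₂ : ℝ) ≤ 0 := by exact_mod_cast Int.lt_add_one_iff.1 (not_le.1 h₂)
      nlinarith

theorem Ico_subset_or_disjoint_of_mem_dyadicPoints (h3β : ∃ k : ℤ, 3 * β = k) {j k : ℤ}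
    (hjk : j ≤ k) {a b : ℝ} (ha : a ∈ dyadicPoints β j) (hb : b ∈ dyadicPoints β k) :
    Ico a (a + 2 ^ j) ⊆ Ico b (b + 2 ^ k) ∨ Disjoint (Ico a (a + 2 ^ j)) (Ico b (b + 2 ^ k)) := by
  have h_anti := dyadicPoints_antitone h3β hjk
  obtain ⟨n₁, hn₁⟩ := exists_eq_add_int_mul_of_mem_dyadicPoints ha (h_anti hb)
  obtain ⟨n₂, hn₂⟩ :=
    exists_eq_add_int_mul_of_mem_dyadicPoints ha (h_anti (add_two_zpow_mem_dyadicPoints hb))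
  rw [hn₂, hn₁]
  exact Ico_subset_or_disjoint_of_int_mul (zpow_pos two_pos j) a n₁ n₂

theorem Ico_subset_or_subset_or_disjoint_of_mem_dyadicGrid (h3β : ∃ k : ℤ, 3 * β = k)
    {I J : ℝ × ℝ} (hI : I ∈ dyadicGrid β) (hJ : J ∈ dyadicGrid β) :
    Ico I.1 I.2 ⊆ Ico J.1 J.2 ∨ Ico J.1 J.2 ⊆ Ico I.1 I.2 ∨
      Disjoint (Ico I.1 I.2) (Ico J.1 J.2) := by
  obtain ⟨j, hI₁, hI₂⟩ := exists_of_mem_dyadicGrid hI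
  obtain ⟨k, hJ₁, hJ₂⟩ := exists_of_mem_dyadicGrid hJ
  rw [hI₂, hJ₂]
  rcases le_total j k with hjk | hkj
  · rcases Ico_subset_or_disjoint_of_mem_dyadicPoints h3β hjk hI₁ hJ₁ with h | h
    exacts [Or.inl h, Or.inr (Or.inr h)]
  · rcases Ico_subset_or_disjoint_of_mem_dyadicPoints h3β hkj hJ₁ hI₁ with h | h
    exacts [Or.inr (Or.inl h), Or.inr (Or.inr h.symm)]

theorem exists_pairwiseDisjoint_cover_of_dyadicGrid (h3β : ∃ k : ℤ, 3 * β = k)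
    (F : Finset (dyadicGrid β)) :
    ∃ Mx ⊆ F, (∀ I ∈ F, ∃ J ∈ Mx, Ico I.1.1 I.1.2 ⊆ Ico J.1.1 J.1.2) ∧
      (Mx : Set (dyadicGrid β)).PairwiseDisjoint fun J => Ico J.1.1 J.1.2 := by
  classical
  set ico : dyadicGrid β → Set ℝ := fun I => Ico I.1.1 I.1.2
  have h_eq {J J' : dyadicGrid β} (hJ : Maximal (· ∈ F.image ico) (ico J)) (hJ' : J' ∈ F)
      (h : ico J ⊆ ico J') : J = J' :=
    Subtype.ext <| eq_of_Ico_eq_of_mem_dyadicGrid J.2 <|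
      hJ.eq_of_le (Finset.mem_image_of_mem ico hJ') h
  refine ⟨F.filter fun J => Maximal (· ∈ F.image ico) (ico J), Finset.filter_subset _ _,
    fun I hI => ?_, fun J hJ J' hJ' hne => ?_⟩
  · obtain ⟨s, hIs, hs⟩ := (F.image ico).exists_le_maximal (Finset.mem_image_of_mem ico hI)
    obtain ⟨J, hJ, rfl⟩ := Finset.mem_image.1 hs.prop
    exact ⟨J, Finset.mem_filter.2 ⟨hJ, hs⟩, hIs⟩
  obtain ⟨hJF, hJ⟩ := Finset.mem_filter.1 hJ
  obtain ⟨hJ'F, hJ'⟩ := Finset.mem_filter.1 hJ'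
  rcases Ico_subset_or_subset_or_disjoint_of_mem_dyadicGrid h3β J.2 J'.2 with h | h | h
  · exact absurd (h_eq hJ hJ'F h) hne
  · exact absurd (h_eq hJ' hJF h).symm hne
  · exact h

end DyadicGrid

theorem measurableSet_Qbox (a b : ℝ) : MeasurableSet (Qbox a b) :=
  (measurableSet_Ioo.preimage Complex.measurable_re).inter
    (measurableSet_Ioo.preimage Complex.measurable_im)

theorem disjoint_Qbox_of_disjoint_Ico {a b c d : ℝ} (h : Disjoint (Ico a b) (Ico c d)) :
    Disjoint (Qbox a b) (Qbox c d) :=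
  have h_re (a b : ℝ) : Qbox a b ⊆ Complex.re ⁻¹' Ico a b := fun _ hz => Ioo_subset_Ico_self hz.1
  (h.preimage Complex.re).mono (h_re a b) (h_re c d)

theorem Finset.sum_le_sum_sum_filter_of_forall_exists {ι κ M : Type*} [AddCommMonoid M]
    [PartialOrder M] [IsOrderedAddMonoid M] [CanonicallyOrderedAdd M]
    {s : Finset ι} {t : Finset κ} (r : ι → κ → Prop) [∀ i j, Decidable (r i j)]
    (h : ∀ i ∈ s, ∃ j ∈ t, r i j) (f : ι → M) :
    ∑ i ∈ s, f i ≤ ∑ j ∈ t, ∑ i ∈ s with r i j, f i := by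
  calc ∑ i ∈ s, f i ≤ ∑ i ∈ s, ∑ j ∈ t, if r i j then f i else 0 := by
        refine Finset.sum_le_sum fun i hi => ?_
        obtain ⟨j, hj, hij⟩ := h i hi
        calc f i = if r i j then f i else 0 := (if_pos hij).symm
          _ ≤ _ := Finset.single_le_sum (f := fun j => if r i j then f i else 0)
            (fun _ _ => zero_le) hj
    _ = ∑ j ∈ t, ∑ i ∈ s with r i j, f i := by
        rw [Finset.sum_comm]
        simp_rw [Finset.sum_filter]

section Packing

variable {β γ : ℝ} {μ : Measure ℂ} {Λ : ℝ × ℝ → ℝ≥0∞} {C : ℝ≥0∞}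

open Classical in
theorem sum_filter_le_tsum_of_Ico_subset (F : Finset (dyadicGrid β)) (J : ℝ × ℝ) :
    ∑ I ∈ F with Ico I.1.1 I.1.2 ⊆ Ico J.1 J.2, Λ I ≤
      ∑' I : {I : ℝ × ℝ // I ∈ dyadicGrid β ∧ Ico I.1 I.2 ⊆ Ico J.1 J.2}, Λ I.val := by
  rw [← Finset.tsum_subtype]
  refine ENNReal.tsum_comp_le_tsum_of_injective
    (f := fun I : {I // I ∈ F.filter fun I => Ico I.1.1 I.1.2 ⊆ Ico J.1 J.2} =>
      (⟨I.1.1, I.1.2, (Finset.mem_filter.1 I.2).2⟩ :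
        {I : ℝ × ℝ // I ∈ dyadicGrid β ∧ Ico I.1 I.2 ⊆ Ico J.1 J.2}))
    (fun I I' h => ?_) fun I => Λ I.val
  exact Subtype.ext (Subtype.ext (congrArg Subtype.val h :))

theorem sum_le_mul_rpow_of_carleson (h3β : ∃ k : ℤ, 3 * β = k) (hγ : 1 ≤ γ)
    (hcarl : ∀ I₀ ∈ dyadicGrid β,
      (∑' I : {I : ℝ × ℝ // I ∈ dyadicGrid β ∧ Ico I.1 I.2 ⊆ Ico I₀.1 I₀.2}, Λ I.val)
        ≤ C * μ (Qbox I₀.1 I₀.2) ^ γ)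
    {G : Set ℂ} (F : Finset (dyadicGrid β)) (hF : ∀ I ∈ F, Qbox I.1.1 I.1.2 ⊆ G) :
    ∑ I ∈ F, Λ I ≤ C * μ G ^ γ := by
  classical
  obtain ⟨Mx, hMx, h_cover, h_disj⟩ := exists_pairwiseDisjoint_cover_of_dyadicGrid h3β F
  have h_disj_Qbox : (Mx : Set (dyadicGrid β)).PairwiseDisjoint fun J => Qbox J.1.1 J.1.2 :=
    fun J hJ J' hJ' hne => disjoint_Qbox_of_disjoint_Ico (h_disj hJ hJ' hne)
  calc ∑ I ∈ F, Λ I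
      ≤ ∑ J ∈ Mx, ∑ I ∈ F with Ico I.1.1 I.1.2 ⊆ Ico J.1.1 J.1.2, Λ I :=
        Finset.sum_le_sum_sum_filter_of_forall_exists _ h_cover _
    _ ≤ ∑ J ∈ Mx, C * μ G ^ (γ - 1) * μ (Qbox J.1.1 J.1.2) := by
        refine Finset.sum_le_sum fun J hJ =>
          (sum_filter_le_tsum_of_Ico_subset F J.1).trans ((hcarl J.1 J.2).trans ?_)
        rw [mul_assoc]
        gcongr
        exact ENNReal.rpow_le_rpow_sub_one_mul hγ (measure_mono (hF J (hMx hJ)))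
    _ = C * μ G ^ (γ - 1) * μ (⋃ J ∈ Mx, Qbox J.1.1 J.1.2) := by
        rw [← Finset.mul_sum, measure_biUnion_finset h_disj_Qbox fun J _ => measurableSet_Qbox _ _]
    _ ≤ C * μ G ^ (γ - 1) * μ G := by
        gcongr
        exact iUnion₂_subset fun J hJ => hF J (hMx hJ)
    _ = C * μ G ^ γ := by rw [mul_assoc, ENNReal.rpow_sub_one_mul hγ]

theorem tsum_indicator_le_mul_rpow_of_carleson (h3β : ∃ k : ℤ, 3 * β = k) (hγ : 1 ≤ γ)
    (hcarl : ∀ I₀ ∈ dyadicGrid β,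
      (∑' I : {I : ℝ × ℝ // I ∈ dyadicGrid β ∧ Ico I.1 I.2 ⊆ Ico I₀.1 I₀.2}, Λ I.val)
        ≤ C * μ (Qbox I₀.1 I₀.2) ^ γ)
    {G : Set ℂ} {S : Set (dyadicGrid β)} (hS : ∀ I ∈ S, Qbox I.1.1 I.1.2 ⊆ G) :
    ∑' I, S.indicator (fun I => Λ I.1) I ≤ C * μ G ^ γ := by
  classical
  rw [ENNReal.tsum_eq_iSup_sum]
  refine iSup_le fun F => ?_
  calc ∑ I ∈ F, S.indicator (fun I => Λ I.1) I = ∑ I ∈ F with I ∈ S, Λ I.1 := by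
        simp only [Finset.sum_filter, indicator_apply]
    _ ≤ C * μ G ^ γ :=
        sum_le_mul_rpow_of_carleson h3β hγ hcarl _ fun I hI => hS I (Finset.mem_filter.1 hI).2

end Packing

theorem lintegral_sum_smul_dirac {ι : Type*} [MeasurableSpace ι] [MeasurableSingletonClass ι]
    (c g : ι → ℝ≥0∞) :
    ∫⁻ i, g i ∂(Measure.sum fun i => c i • Measure.dirac i) = ∑' i, c i * g i := by
  simp [lintegral_sum_measure, lintegral_smul_measure, lintegral_dirac]

theorem sum_smul_dirac_apply {ι : Type*} [MeasurableSpace ι] (c : ι → ℝ≥0∞) {s : Set ι}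
    (hs : MeasurableSet s) :
    (Measure.sum fun i => c i • Measure.dirac i) s = ∑' i, s.indicator c i := by
  simp [Measure.sum_apply _ hs, Measure.dirac_apply' _ hs, ← indicator_mul_right]

theorem luxNorm_le_dyadicMax {β α : ℝ} {Φ : ℝ → ℝ} {ω : ℂ → ℝ} {f : ℂ → ℂ} {I : ℝ × ℝ}
    (hI : I ∈ dyadicGrid β) {z : ℂ} (hz : z ∈ Qbox I.1 I.2) :
    luxNorm α Φ ω I.1 I.2 f ≤ dyadicMax β α Φ ω f z :=
  le_iSup₂_of_le I hI (le_iSup_of_le hz le_rfl)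

theorem measurable_dyadicMax (β α : ℝ) (Φ : ℝ → ℝ) (ω : ℂ → ℝ) (f : ℂ → ℂ) :
    Measurable (dyadicMax β α Φ ω f) := by
  have h : dyadicMax β α Φ ω f = fun z => ⨆ I ∈ dyadicGrid β,
      (Qbox I.1 I.2).indicator (fun _ => luxNorm α Φ ω I.1 I.2 f) z := by
    classical
    ext z
    simp only [dyadicMax, indicator_apply, iSup_eq_if, bot_eq_zero]
  rw [h]
  exact Measurable.biSup _ (dyadicGrid_countable β) fun I _ =>
    measurable_const.indicator (measurableSet_Qbox _ _)

theorem statement14_general (α β γ : ℝ) (hβ : β = 0 ∨ β = 1/3) (hγ : 1 ≤ γ)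
    (ω : ℂ → ℝ) (hω : IsWeight α ω)
    (Λ : ℝ × ℝ → ℝ≥0∞) (A : ℝ) (hA : 0 < A)
    (hcarl : ∀ I₀ ∈ dyadicGrid β,
      (∑' I : {I : ℝ × ℝ // I ∈ dyadicGrid β ∧ Set.Ico I.1 I.2 ⊆ Set.Ico I₀.1 I₀.2},
          Λ I.val)
        ≤ ENNReal.ofReal A * (wvol α ω (Qbox I₀.1 I₀.2)) ^ γ) :
    ∃ B : ℝ, 0 < B ∧ ∀ p : ℝ, 1 < p → ∀ Φ : ℝ → ℝ, IsNormalizedYoung Φ → InBp Φ p →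
      ∀ f : ℂ → ℂ, Measurable f → HasCompactSupport f →
      (∑' I : {I : ℝ × ℝ // I ∈ dyadicGrid β},
          Λ I.val * (luxNorm α Φ ω I.val.1 I.val.2 f) ^ (p * γ))
        ≤ ENNReal.ofReal B *
            (∫⁻ z, (dyadicMax β α Φ ω f z) ^ p * ENNReal.ofReal (ω z) ∂(Vm α)) ^ γ := by
  refine ⟨A * γ, by positivity, fun p hp Φ _ _ f _ _ => ?_⟩
  have h3β : ∃ k : ℤ, 3 * β = k := by
    rcases hβ with rfl | rfl
    exacts [⟨0, by norm_num⟩, ⟨1, by norm_num⟩]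
  have : Countable (dyadicGrid β) := (dyadicGrid_countable β).to_subtype
  have : SFinite (Vm α) := by unfold Vm; infer_instance
  set μω := (Vm α).withDensity fun z => ENNReal.ofReal (ω z)
  set ν := Measure.sum fun I : dyadicGrid β => Λ I.1 • Measure.dirac I
  set M := dyadicMax β α Φ ω f
  have hcarl_μω : ∀ I₀ ∈ dyadicGrid β,
      (∑' I : {I : ℝ × ℝ // I ∈ dyadicGrid β ∧ Ico I.1 I.2 ⊆ Ico I₀.1 I₀.2}, Λ I.val)
        ≤ ENNReal.ofReal A * μω (Qbox I₀.1 I₀.2) ^ γ := fun I₀ hI₀ => by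
    rw [withDensity_apply _ (measurableSet_Qbox _ _)]
    exact hcarl I₀ hI₀
  have h_tail (t : ℝ) (_ : 0 < t) : ν {I | ENNReal.ofReal t < luxNorm α Φ ω I.1.1 I.1.2 f}
        ≤ ENNReal.ofReal A * μω {z | ENNReal.ofReal t < M z} ^ γ := by
    rw [sum_smul_dirac_apply _ (Set.to_countable _).measurableSet]
    exact tsum_indicator_le_mul_rpow_of_carleson h3β hγ hcarl_μω fun I hI z hz =>
      hI.trans_le (luxNorm_le_dyadicMax I.2 hz)
  calc ∑' I : dyadicGrid β, Λ I.1 * luxNorm α Φ ω I.1.1 I.1.2 f ^ (p * γ)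
      = ∫⁻ I, luxNorm α Φ ω I.1.1 I.1.2 f ^ (p * γ) ∂ν :=
        (lintegral_sum_smul_dirac _ _).symm
    _ ≤ ENNReal.ofReal A * ENNReal.ofReal γ * (∫⁻ z, M z ^ p ∂μω) ^ γ :=
        lintegral_rpow_mul_le_of_meas_lt_le (measurable_of_countable _)
          (measurable_dyadicMax β α Φ ω f) (by linarith) hγ _ h_tail
    _ = ENNReal.ofReal (A * γ) * (∫⁻ z, M z ^ p * ENNReal.ofReal (ω z) ∂(Vm α)) ^ γ := by
        rw [ENNReal.ofReal_mul hA.le, lintegral_withDensity_eq_lintegral_mul _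
          hω.1.ennreal_ofReal ((measurable_dyadicMax β α Φ ω f).pow_const p)]
        exact congrArg (_ * · ^ γ) (lintegral_congr fun z => mul_comm _ _)

/-- Theorem 2.9, Carleson embedding: if `{Λ_Q}` satisfies the
`(ω,α,γ)`-Carleson condition with constant `A`, then for every `p > 1`, `Φ ∈ B_p`
and `f`, `∑_Q Λ_Q ‖f‖_{Q,Φ,ω,α}^{pγ} ≤ B ‖M^{d,β}_{Φ,ω,α} f‖_{L^p(ω dV_α)}^{pγ}`. -/
theorem statement14 (α β γ : ℝ) (hα : -1 < α) (hβ : β = 0 ∨ β = 1/3) (hγ : 1 ≤ γ)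
    (ω : ℂ → ℝ) (hω : IsWeight α ω)
    (Λ : ℝ × ℝ → ℝ≥0∞) (A : ℝ) (hA : 0 < A)
    (hcarl : ∀ I₀ ∈ dyadicGrid β,
      (∑' I : {I : ℝ × ℝ // I ∈ dyadicGrid β ∧ Set.Ico I.1 I.2 ⊆ Set.Ico I₀.1 I₀.2},
          Λ I.val)
        ≤ ENNReal.ofReal A * (wvol α ω (Qbox I₀.1 I₀.2)) ^ γ) :
    ∃ B : ℝ, 0 < B ∧ ∀ p : ℝ, 1 < p → ∀ Φ : ℝ → ℝ, IsNormalizedYoung Φ → InBp Φ p →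
      ∀ f : ℂ → ℂ, Measurable f → HasCompactSupport f →
      (∑' I : {I : ℝ × ℝ // I ∈ dyadicGrid β},
          Λ I.val * (luxNorm α Φ ω I.val.1 I.val.2 f) ^ (p * γ))
        ≤ ENNReal.ofReal B *
            (∫⁻ z, (dyadicMax β α Φ ω f z) ^ p * ENNReal.ofReal (ω z) ∂(Vm α)) ^ γ :=
  statement14_general α β γ hβ hγ ω hω Λ A hA hcarl
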